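/- The distribution law rewriting relation on microCCS processes is strongly normalising: there is no infinite sequence of rewrite steps. -/

import Mathlib

/-- CCS visible actions: a name `a` or a coname `ā`. -/
inductive Act where
  | inp : ℕ → Act
  | out : ℕ → Act
deriving DecidableEq

/-- The coaction. -/
def Act.co : Act → Act
  | .inp a => .out a
  | .out a => .inp a

/-- MicroCCS processes: nil, prefix, parallel composition. -/
inductive Proc where
  | nil : Proc
  | pre : Act → Proc → Proc
  | par : Proc → Proc → Proc
deriving DecidableEq

/-- Transition labels: a visible action or τ. -/
inductive Lab where
  | act : Act → Lab
  | tau : Lab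
deriving DecidableEq

/-- The standard CCS labelled transition system on microCCS. -/
inductive Step : Proc → Lab → Proc → Prop where
  | pre (η : Act) (P : Proc) : Step (.pre η P) (.act η) P
  | syn {P P' Q Q' : Proc} {η : Act} :
      Step P (.act η) P' → Step Q (.act η.co) Q' →
      Step (.par P Q) .tau (.par P' Q')
  | parL {P P' : Proc} {μ : Lab} (Q : Proc) :
      Step P μ P' → Step (.par P Q) μ (.par P' Q)
  | parR {Q Q' : Proc} {μ : Lab} (P : Proc) :
      Step Q μ Q' → Step (.par P Q) μ (.par P Q')

/-- A (symmetric) bisimulation. -/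
def IsBisim (R : Proc → Proc → Prop) : Prop :=
  (∀ P Q, R P Q → R Q P) ∧
  ∀ P Q μ P', R P Q → Step P μ P' → ∃ Q', Step Q μ Q' ∧ R P' Q'

/-- Strong bisimilarity: the union of all bisimulations. -/
def Bisim (P Q : Proc) : Prop := ∃ R, IsBisim R ∧ R P Q

/-- The size of a process: its number of prefixes. -/
def Proc.size : Proc → ℕ
  | .nil => 0
  | .pre _ P => 1 + P.size
  | .par P Q => P.size + Q.size

/-- Structural congruence: abelian monoid laws for parallel composition. -/
inductive SC : Proc → Proc → Prop where
  | refl (P) : SC P P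
  | symm : SC P Q → SC Q P
  | trans : SC P Q → SC Q R → SC P R
  | comm (P Q) : SC (.par P Q) (.par Q P)
  | assoc (P Q R) : SC (.par P (.par Q R)) (.par (.par P Q) R)
  | unit (P) : SC (.par P .nil) P
  | pre (η) : SC P Q → SC (.pre η P) (.pre η Q)
  | par : SC P P' → SC Q Q' → SC (.par P Q) (.par P' Q')

/-- `pow P k` is the k-fold parallel composition of `P`. -/
def pow (P : Proc) : ℕ → Proc
  | 0 => .nil
  | n+1 => .par P (pow P n)

/-- One step of rewriting with the distribution law
    `η.(P ‖ (η.P)^k) ⇝ (η.P)^{k+1}` (k ≥ 1), modulo structural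
    congruence, in any context. -/
inductive RW : Proc → Proc → Prop where
  | head {η : Act} {P : Proc} {k : ℕ} (hk : 1 ≤ k) :
      RW (.pre η (.par P (pow (.pre η P) k))) (pow (.pre η P) (k+1))
  | pre (η) : RW P P' → RW (.pre η P) (.pre η P')
  | parL (Q) : RW P P' → RW (.par P Q) (.par P' Q)
  | parR (P) : RW Q Q' → RW (.par P Q) (.par P Q')
  | congr : SC P P₁ → RW P₁ P₂ → SC P₂ P' → RW P P'

/-- Reflexive-transitive closure of the distribution rewriting. -/
def Rws : Proc → Proc → Prop := Relation.ReflTransGen RW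

/-- Normal forms for the distribution rewriting. -/
def NF (P : Proc) : Prop := ¬ ∃ P', RW P P'

/-- Prime processes. -/
def IsPrime (P : Proc) : Prop :=
  ¬ Bisim P .nil ∧ ∀ Q R, Bisim P (.par Q R) → Bisim Q .nil ∨ Bisim R .nil

/-! Each prefix contributes its depth to the weight, and the weight of `η.P` is
`1 + P.size + P.weight`. Structural congruence preserves size and weight, rewriting
preserves size, and a head step `η.(P ‖ (η.P)^k) ⇝ (η.P)^{k+1}` lowers the weight by
`k * (1 + P.size) ≥ 1`; this carries through contexts because the size of the redex is
unchanged. A strictly decreasing sequence of naturals cannot be infinite. -/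

def Proc.weight : Proc → ℕ
  | .nil => 0
  | .pre _ P => 1 + P.size + P.weight
  | .par P Q => P.weight + Q.weight

theorem pow_size (P : Proc) (k : ℕ) : (pow P k).size = k * P.size := by
  induction k with
  | zero => simp [pow, Proc.size]
  | succ n ih => simp only [pow, Proc.size, ih]; ring

theorem pow_weight (P : Proc) (k : ℕ) : (pow P k).weight = k * P.weight := by
  induction k with
  | zero => simp [pow, Proc.weight]
  | succ n ih => simp only [pow, Proc.weight, ih]; ring

namespace SC

theorem size_eq {P Q : Proc} (h : SC P Q) : P.size = Q.size := by
  induction h <;> (try simp only [Proc.size] at *) <;> omega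

theorem weight_eq {P Q : Proc} (h : SC P Q) : P.weight = Q.weight := by
  induction h with
  | pre _ h ih => simp only [Proc.weight, h.size_eq, ih]
  | _ => (try simp only [Proc.weight] at *) <;> omega

end SC

namespace RW

theorem size_eq {P Q : Proc} (h : RW P Q) : P.size = Q.size := by
  induction h with
  | head _ => simp only [Proc.size, pow_size]; ring
  | congr h₁ _ h₃ ih => rw [h₁.size_eq, ih, h₃.size_eq]
  | pre _ _ ih | parL _ _ ih | parR _ _ ih => simp only [Proc.size, ih]

theorem weight_lt {P Q : Proc} (h : RW P Q) : Q.weight < P.weight := by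
  induction h with
  | @head η P k hk =>
      have : (pow (.pre η P) (k + 1)).weight + k * (1 + P.size)
          = (Proc.pre η (.par P (pow (.pre η P) k))).weight := by
        simp only [Proc.weight, Proc.size, pow_weight, pow_size]; ring
      nlinarith
  | pre _ h ih => simp only [Proc.weight, h.size_eq]; omega
  | congr h₁ _ h₃ ih => rwa [h₁.weight_eq, ← h₃.weight_eq]
  | _ => simp only [Proc.weight]; omega

end RW

/-- the distribution-law rewriting is strongly normalising:
    there is no infinite sequence of rewrite steps. -/
theorem rw_strongly_normalising :
    ¬ ∃ f : ℕ → Proc, ∀ n, RW (f n) (f (n+1)) := by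
  rintro ⟨f, hf⟩
  exact not_strictAnti_of_wellFoundedLT (fun n ↦ (f n).weight)
    (strictAnti_nat_of_succ_lt fun n ↦ (hf n).weight_lt)
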